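/- Correctness of the Fourier-representation construction: let f : {0,1}^n → {0,1} be a Boolean function, and let S_1, …, S_k (k ≥ 1) enumerate the nonempty subsets S of {0,…,n−1} with f̂(S) ≠ 0. Set Θ = π · Σ_{S ⊆ {0,…,n−1}} f̂(S) (sum over all subsets including the empty set), and for i = 1,…,k set φ_i = −2π·f̂(S_i). Then for every x ∈ {0,1}^n, with s_i = χ_{S_i}(x) and M_i = cos(Θ/k + φ_i s_i)·σx + sin(Θ/k + φ_i s_i)·σy, one has ⟨v, (⊗_{i=1}^k M_i) v⟩ = (−1)^{f(x)}, where v is the k-qubit GHZ state. -/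

import Mathlib

open scoped BigOperators

/-- The Pauli X matrix. -/
noncomputable def sigmaX : Matrix (Fin 2) (Fin 2) ℂ := !![0, 1; 1, 0]

/-- The Pauli Y matrix. -/
noncomputable def sigmaY : Matrix (Fin 2) (Fin 2) ℂ := !![0, -Complex.I; Complex.I, 0]

/-- Equatorial single-qubit measurement operator with angle `α`. -/
noncomputable def Meq (α : ℝ) : Matrix (Fin 2) (Fin 2) ℂ :=
  (Real.cos α : ℂ) • sigmaX + (Real.sin α : ℂ) • sigmaY

/-- Tensor product of `k` single-qubit operators. -/
noncomputable def tensorOp {k : ℕ} (M : Fin k → Matrix (Fin 2) (Fin 2) ℂ) :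
    Matrix (Fin k → Fin 2) (Fin k → Fin 2) ℂ :=
  fun a b => ∏ i, M i (a i) (b i)

/-- The `k`-qubit GHZ state. -/
noncomputable def ghz (k : ℕ) : (Fin k → Fin 2) → ℂ :=
  fun a => if (∀ i, a i = 0) ∨ (∀ i, a i = 1) then ((Real.sqrt 2 : ℝ) : ℂ)⁻¹ else 0

/-- Standard Hermitian inner product, conjugate linear in the first argument. -/
noncomputable def inprod {ι : Type} [Fintype ι] (v w : ι → ℂ) : ℂ :=
  ∑ a, (starRingEnd ℂ) (v a) * w a

/-- The parity `χ_S(x) = ⊕_{i ∈ S} x_i ∈ {0,1}`. -/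
def chi {n : ℕ} (S : Finset (Fin n)) (x : Fin n → Bool) : ℕ :=
  (∑ i ∈ S, if x i then 1 else 0) % 2

/-- The Fourier coefficient `ĝ(S) = 2^{-n} Σ_x g(x) (-1)^{χ_S(x)}`. -/
noncomputable def fourierCoef {n : ℕ} (g : (Fin n → Bool) → ℝ) (S : Finset (Fin n)) : ℝ :=
  (2 ^ n : ℝ)⁻¹ * ∑ x : Fin n → Bool, g x * (-1 : ℝ) ^ chi S x

/-- A Boolean function viewed as a real-valued function. -/
def boolToReal {n : ℕ} (f : (Fin n → Bool) → Bool) : (Fin n → Bool) → ℝ :=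
  fun x => if f x then 1 else 0

/-!
For equatorial operators `Mᵢ = Meq αᵢ` the only entries of `⊗ᵢ Mᵢ` seen by the GHZ state are
those between `|0…0⟩` and `|1…1⟩`, namely `e^{± i Σᵢ αᵢ}`; hence the expectation is
`cos (Σᵢ αᵢ)`. Writing `(-1)^{χ_S} = 1 - 2 χ_S` in Fourier inversion gives
`Σ_S f̂(S) χ_S(x) = (Σ_S f̂(S) - f(x)) / 2`, and only the sets `Sᵢ` contribute to the left side, so
the angles add up to `Θ - 2π Σᵢ f̂(Sᵢ) sᵢ = π f(x)`, whose cosine is `(-1)^{f(x)}`.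
-/

lemma Meq_apply_zero_zero (α : ℝ) : Meq α 0 0 = 0 := by simp [Meq, sigmaX, sigmaY]

lemma Meq_apply_one_one (α : ℝ) : Meq α 1 1 = 0 := by simp [Meq, sigmaX, sigmaY]

lemma Meq_apply_one_zero (α : ℝ) : Meq α 1 0 = Complex.exp (α * Complex.I) := by
  rw [Complex.exp_mul_I]
  simp [Meq, sigmaX, sigmaY, Complex.ofReal_cos, Complex.ofReal_sin]

lemma Meq_apply_zero_one (α : ℝ) : Meq α 0 1 = Complex.exp (-α * Complex.I) := by
  rw [Complex.exp_mul_I, Complex.cos_neg, Complex.sin_neg]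
  simp [Meq, sigmaX, sigmaY, Complex.ofReal_cos, Complex.ofReal_sin]

section GHZ

variable {k : ℕ}

lemma tensorOp_apply_const {M : Fin k → Matrix (Fin 2) (Fin 2) ℂ} (a b : Fin 2) :
    tensorOp M (fun _ => a) (fun _ => b) = ∏ i, M i a b := rfl

lemma conj_ghz (a : Fin k → Fin 2) : starRingEnd ℂ (ghz k a) = ghz k a := by
  unfold ghz
  split_ifs <;> simp [← Complex.ofReal_inv]

lemma sum_ghz_mul (hk : 1 ≤ k) (g : (Fin k → Fin 2) → ℂ) :
    ∑ a, ghz k a * g a = ((Real.sqrt 2 : ℝ) : ℂ)⁻¹ * (g (fun _ => 0) + g (fun _ => 1)) := by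
  have hne : (fun _ => 0 : Fin k → Fin 2) ≠ fun _ => 1 :=
    fun h => by simpa using congrFun h ⟨0, hk⟩
  rw [← Finset.sum_subset (Finset.subset_univ {fun _ => 0, fun _ => 1}), Finset.sum_pair hne]
  · simp [ghz, mul_add]
  · intro a _ ha
    have : ¬((∀ i, a i = 0) ∨ ∀ i, a i = 1) := by
      rintro (h | h) <;> simp [funext h] at ha
    simp [ghz, this]

lemma inprod_ghz_mulVec_ghz (hk : 1 ≤ k) (A : Matrix (Fin k → Fin 2) (Fin k → Fin 2) ℂ) :
    inprod (ghz k) (A.mulVec (ghz k))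
      = (A (fun _ => 0) (fun _ => 0) + A (fun _ => 0) (fun _ => 1)
          + A (fun _ => 1) (fun _ => 0) + A (fun _ => 1) (fun _ => 1)) / 2 := by
  have hmulVec : ∀ a, A.mulVec (ghz k) a = ∑ b, ghz k b * A a b := fun a => by
    simp [Matrix.mulVec, dotProduct, mul_comm]
  have hsq : ((Real.sqrt 2 : ℝ) : ℂ)⁻¹ * ((Real.sqrt 2 : ℝ) : ℂ)⁻¹ = 2⁻¹ := by
    rw [← mul_inv, ← Complex.ofReal_mul, Real.mul_self_sqrt zero_le_two]
    norm_num
  simp only [inprod, conj_ghz, sum_ghz_mul hk, hmulVec]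
  linear_combination (A (fun _ => 0) (fun _ => 0) + A (fun _ => 0) (fun _ => 1)
    + A (fun _ => 1) (fun _ => 0) + A (fun _ => 1) (fun _ => 1)) * hsq

lemma inprod_ghz_tensorOp_Meq (hk : 1 ≤ k) (α : Fin k → ℝ) :
    inprod (ghz k) ((tensorOp fun i => Meq (α i)).mulVec (ghz k)) = Real.cos (∑ i, α i) := by
  have i₀ : (⟨0, hk⟩ : Fin k) ∈ Finset.univ := Finset.mem_univ _
  have h00 : ∏ i, Meq (α i) 0 0 = 0 := Finset.prod_eq_zero i₀ (Meq_apply_zero_zero _)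
  have h11 : ∏ i, Meq (α i) 1 1 = 0 := Finset.prod_eq_zero i₀ (Meq_apply_one_one _)
  rw [inprod_ghz_mulVec_ghz hk]
  simp only [tensorOp_apply_const, h00, h11, Meq_apply_zero_one, Meq_apply_one_zero, ← Complex.exp_sum, ← Finset.sum_mul,
    Finset.sum_neg_distrib, Complex.ofReal_cos, Complex.cos, Complex.ofReal_sum]
  ring

end GHZ

section Fourier

variable {n : ℕ}

lemma neg_one_pow_chi (T : Finset (Fin n)) (x : Fin n → Bool) :
    (-1 : ℝ) ^ chi T x = ∏ i ∈ T, (if x i then -1 else 1) := by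
  rw [chi, ← neg_one_pow_eq_pow_mod_two, ← Finset.prod_pow_eq_pow_sum]
  exact Finset.prod_congr rfl fun i _ => by split <;> simp

lemma neg_one_pow_chi_eq_one_sub (T : Finset (Fin n)) (x : Fin n → Bool) :
    (-1 : ℝ) ^ chi T x = 1 - 2 * chi T x := by
  rcases Nat.mod_two_eq_zero_or_one (∑ i ∈ T, if x i then 1 else 0) with h | h <;>
    rw [chi, h] <;> norm_num

lemma chi_empty (x : Fin n → Bool) : chi ∅ x = 0 := by simp [chi]

lemma sum_neg_one_pow_chi_mul (x y : Fin n → Bool) :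
    ∑ T : Finset (Fin n), (-1 : ℝ) ^ chi T x * (-1) ^ chi T y = if x = y then 2 ^ n else 0 := by
  -- the sum over all `T` expands `∏ᵢ (εᵢ + 1)`, where `εᵢ = 1` if `x i = y i` and `-1` otherwise
  have hexpand : ∑ T : Finset (Fin n), (-1 : ℝ) ^ chi T x * (-1) ^ chi T y
      = ∏ i, ((if x i then -1 else 1) * (if y i then -1 else 1) + 1) := by
    simp only [neg_one_pow_chi, ← Finset.prod_mul_distrib]
    rw [Finset.prod_add_one, Finset.powerset_univ]
  have hfactor : ∀ i, ((if x i then -1 else 1) * (if y i then -1 else 1) + 1 : ℝ)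
      = if x i = y i then 2 else 0 := fun i => by
    cases x i <;> cases y i <;> norm_num
  rw [hexpand, Finset.prod_congr rfl fun i _ => hfactor i]
  split_ifs with h
  · simp [h]
  · obtain ⟨i, hi⟩ := Function.ne_iff.mp h
    exact Finset.prod_eq_zero (Finset.mem_univ i) (if_neg hi)

theorem fourier_inversion (g : (Fin n → Bool) → ℝ) (x : Fin n → Bool) :
    ∑ T : Finset (Fin n), fourierCoef g T * (-1) ^ chi T x = g x := by
  calc ∑ T : Finset (Fin n), fourierCoef g T * (-1) ^ chi T x
      = (2 ^ n : ℝ)⁻¹ * ∑ y, g y * ∑ T : Finset (Fin n), (-1) ^ chi T y * (-1) ^ chi T x := by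
        simp only [fourierCoef, mul_assoc, Finset.mul_sum, Finset.sum_mul]
        rw [Finset.sum_comm]
    _ = g x := by
        simp only [sum_neg_one_pow_chi_mul, mul_ite, mul_zero, Finset.sum_ite_eq',
          Finset.mem_univ, if_true]
        field_simp

lemma sum_fourierCoef_mul_chi (g : (Fin n → Bool) → ℝ) (x : Fin n → Bool) :
    ∑ T : Finset (Fin n), fourierCoef g T * chi T x
      = ((∑ T : Finset (Fin n), fourierCoef g T) - g x) / 2 := by
  conv_rhs => rw [← fourier_inversion g x]
  simp only [neg_one_pow_chi_eq_one_sub, ← Finset.sum_sub_distrib, Finset.sum_div]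
  exact Finset.sum_congr rfl fun T _ => by ring

end Fourier

/-- Sets outside the enumeration contribute nothing: either `f̂(T) = 0` or `T = ∅`, where `χ_∅ = 0`. -/
lemma sum_fourierCoef_mul_chi_of_enumeration {n : ℕ} {ι : Type*} [Fintype ι]
    (g : (Fin n → Bool) → ℝ) (S : ι → Finset (Fin n)) (hinj : Function.Injective S)
    (hS : ∀ T : Finset (Fin n), T.Nonempty → fourierCoef g T ≠ 0 → T ∈ Set.range S)
    (x : Fin n → Bool) :
    ∑ i, fourierCoef g (S i) * chi (S i) x = ∑ T, fourierCoef g T * chi T x := by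
  refine Fintype.sum_of_injective S hinj _ _ (fun T hT => ?_) fun _ => rfl
  obtain rfl | hne := T.eq_empty_or_nonempty
  · simp [chi_empty]
  · simp [not_not.mp (mt (hS T hne) hT)]

/-- Correctness of the Fourier-representation construction: if `S₁, …, S_k` enumerate the
nonempty sets with nonzero Fourier coefficient of `f`, `Θ = π Σ_S f̂(S)` and
`φᵢ = −2π f̂(Sᵢ)`, then measuring `Mᵢ = cos(Θ/k + φᵢ sᵢ) σx + sin(Θ/k + φᵢ sᵢ) σy`
(with `sᵢ = χ_{Sᵢ}(x)`) on the `k`-qubit GHZ state yields `(−1)^{f(x)}`. -/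
theorem fourier_construction_correct (n k : ℕ) (hk : 1 ≤ k)
    (f : (Fin n → Bool) → Bool)
    (S : Fin k → Finset (Fin n)) (hinj : Function.Injective S)
    (hS : ∀ T : Finset (Fin n),
      (T.Nonempty ∧ fourierCoef (boolToReal f) T ≠ 0) ↔ ∃ i, S i = T) :
    ∀ x : Fin n → Bool,
      inprod (ghz k)
        ((tensorOp fun i => Meq
            ((Real.pi * ∑ T : Finset (Fin n), fourierCoef (boolToReal f) T) / (k : ℝ)
              + (-2 * Real.pi * fourierCoef (boolToReal f) (S i)) * (chi (S i) x : ℝ))).mulVec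
          (ghz k))
        = (if f x then (-1 : ℂ) else 1) := by
  intro x
  have hk₀ : (k : ℝ) ≠ 0 := Nat.cast_ne_zero.mpr (by omega)
  have htotal : ∑ i, ((Real.pi * ∑ T : Finset (Fin n), fourierCoef (boolToReal f) T) / k
      + (-2 * Real.pi * fourierCoef (boolToReal f) (S i)) * (chi (S i) x : ℝ))
      = Real.pi * boolToReal f x := by
    rw [Finset.sum_add_distrib, Finset.sum_const, Finset.card_fin, nsmul_eq_mul,
      mul_div_cancel₀ _ hk₀]
    simp only [mul_assoc, ← Finset.mul_sum]
    rw [sum_fourierCoef_mul_chi_of_enumeration _ S hinj (fun T hT hc => (hS T).mp ⟨hT, hc⟩),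
      sum_fourierCoef_mul_chi]
    ring
  rw [inprod_ghz_tensorOp_Meq hk, htotal]
  by_cases hf : f x <;> simp [boolToReal, hf]
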